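/- Let n ≥ 1 and 1 ≤ q ≤ 2. For every t > 0, ω_{n-1}(2π)^{-n} ∫_0^∞ r^{n-1} e^{-qtr²} (1+r²)^{-n/2} dr ≤ (2 log(e+1/t) / ((4π)^{n/2} Γ(n/2))) · (e^{-1/2} + (1/n)(e/(2q))^{n/2}), where ω_{n-1} = 2π^{n/2}/Γ(n/2). -/

import Mathlib

open MeasureTheory Real Set
open scoped ENNReal NNReal

noncomputable section

abbrev Rn (n : ℕ) := EuclideanSpace ℝ (Fin n)

/-- Fourier transform on ℝⁿ with normalization (2π)^{-n/2} ∫ e^{-ix·ξ} f(x) dx. -/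
def FTn {n : ℕ} (f : Rn n → ℂ) (ξ : Rn n) : ℂ :=
  (((2 * π) ^ (-(n : ℝ) / 2) : ℝ) : ℂ) *
    ∫ x : Rn n, Complex.exp (-Complex.I * ((inner ℝ x ξ : ℝ) : ℂ)) * f x

/-- Inverse Fourier transform on ℝⁿ. -/
def invFTn {n : ℕ} (g : Rn n → ℂ) (x : Rn n) : ℂ :=
  (((2 * π) ^ (-(n : ℝ) / 2) : ℝ) : ℂ) *
    ∫ ξ : Rn n, Complex.exp (Complex.I * ((inner ℝ x ξ : ℝ) : ℂ)) * g ξ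

/-- Heat semigroup on ℝⁿ. -/
def heatn {n : ℕ} (t : ℝ) (f : Rn n → ℂ) : Rn n → ℂ :=
  invFTn (fun ξ => Complex.exp (-(t : ℂ) * (‖ξ‖ : ℂ) ^ 2) * FTn f ξ)

/-- The H^{s,q} norm ‖𝓕⁻¹[(1+|ξ|²)^{s/2} 𝓕f]‖_{L^q}. -/
def HsqNorm (n : ℕ) (s q : ℝ) (f : Rn n → ℂ) : ℝ≥0∞ :=
  eLpNorm (invFTn (fun ξ => (((1 + ‖ξ‖ ^ 2) ^ (s / 2) : ℝ) : ℂ) * FTn f ξ))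
    (ENNReal.ofReal q) volume

/-- Surface area of the unit sphere in ℝⁿ. -/
def ωSphere (n : ℕ) : ℝ := 2 * π ^ ((n : ℝ) / 2) / Real.Gamma ((n : ℝ) / 2)

/-- Exponential integral E₁. -/
def E1 (τ : ℝ) : ℝ := ∫ ρ in Ioi τ, Real.exp (-ρ) / ρ


/-!
Split the radial integral at `r = √s` with `s = e / (2q)`. Below the cut the integrand is at most
`r ^ (n - 1)`, contributing `s ^ (n / 2) / n`. Above it, `r ^ (n - 1) (1 + r²) ^ (-n / 2) ≤ 1 / r` and
`e ^ (-x) ≤ 1 / (1 + x)` give the majorant `1 / (r (1 + q t r²))`, whose integral over `(√s, ∞)` is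
`log (1 + 2 / (e t)) / 2 ≤ e ^ (-1/2) log (e + 1/t)`. Since `log (e + 1/t) ≥ 1`, both pieces fit the
right-hand side once `ω_{n-1} (2π) ^ (-n) = 2 / ((4π) ^ (n/2) Γ(n/2))`.
-/

open Filter Topology

lemma ωSphere_mul_two_pi_rpow_neg (n : ℕ) :
    ωSphere n * (2 * π) ^ (-(n : ℝ)) =
      2 / ((4 * π) ^ ((n : ℝ) / 2) * Real.Gamma ((n : ℝ) / 2)) := by
  have h4π : (4 * π) ^ ((n : ℝ) / 2) * π ^ ((n : ℝ) / 2) = (2 * π) ^ (n : ℝ) := by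
    rw [← mul_rpow (by positivity) pi_pos.le, show 4 * π * π = (2 * π) ^ (2 : ℝ) by norm_num; ring,
      ← rpow_mul (by positivity)]
    ring_nf
  rw [ωSphere, rpow_neg (by positivity), ← h4π]
  field_simp

lemma rpow_sub_one_mul_one_add_sq_rpow_neg_le {ν r : ℝ} (hν : 0 ≤ ν) (hr : 0 < r) :
    r ^ (ν - 1) * (1 + r ^ 2) ^ (-ν / 2) ≤ r⁻¹ := by
  have hpow : r ^ ν ≤ (1 + r ^ 2) ^ (ν / 2) := by
    rw [show r ^ ν = (r ^ 2) ^ (ν / 2) by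
      rw [← rpow_natCast, ← rpow_mul hr.le]; ring_nf]
    gcongr
    linarith
  rw [rpow_sub_one hr.ne', neg_div, rpow_neg (by positivity), div_mul_eq_mul_div, div_le_iff₀ hr,
    inv_mul_cancel₀ hr.ne', ← div_eq_mul_inv, div_le_one (by positivity)]
  exact hpow

lemma exp_neg_le_inv_one_add {x : ℝ} (hx : 0 ≤ x) : exp (-x) ≤ (1 + x)⁻¹ := by
  rw [exp_neg]
  exact inv_anti₀ (by positivity) (by linarith [add_one_le_exp x])

lemma hasDerivAt_neg_log_add_inv_sq_div_two {a x : ℝ} (ha : 0 < a) (hx : 0 < x) :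
    HasDerivAt (fun r => -log (a + (r ^ 2)⁻¹) / 2) (x * (1 + a * x ^ 2))⁻¹ x := by
  have hinner : HasDerivAt (fun r : ℝ => a + (r ^ 2)⁻¹) (-(↑2 * x ^ 1) / (x ^ 2) ^ 2) x :=
    ((hasDerivAt_pow 2 x).inv (by positivity)).const_add a
  refine ((hinner.log (by positivity)).fun_neg.div_const 2).congr_deriv ?_
  field_simp
  ring

lemma integrableOn_and_integral_Ioi_inv_mul_one_add_mul_sq {a R : ℝ} (ha : 0 < a) (hR : 0 < R) :
    IntegrableOn (fun r => (r * (1 + a * r ^ 2))⁻¹) (Ioi R) ∧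
      ∫ r in Ioi R, (r * (1 + a * r ^ 2))⁻¹ = log (1 + (a * R ^ 2)⁻¹) / 2 := by
  have hderiv : ∀ x ∈ Ici R, HasDerivAt (fun r => -log (a + (r ^ 2)⁻¹) / 2)
      (x * (1 + a * x ^ 2))⁻¹ x :=
    fun x hx => hasDerivAt_neg_log_add_inv_sq_div_two ha (hR.trans_le hx)
  have hnonneg : ∀ x ∈ Ioi R, 0 ≤ (x * (1 + a * x ^ 2))⁻¹ := by
    intro x hx
    have := hR.trans hx
    positivity
  have hlim : Tendsto (fun r => -log (a + (r ^ 2)⁻¹) / 2) atTop (𝓝 (-log a / 2)) := by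
    have : Tendsto (fun r : ℝ => a + (r ^ 2)⁻¹) atTop (𝓝 a) := by
      simpa using (tendsto_inv_atTop_zero.comp (tendsto_pow_atTop two_ne_zero)).const_add a
    exact ((continuousAt_log ha.ne').tendsto.comp this).neg.div_const 2
  refine ⟨integrableOn_Ioi_deriv_of_nonneg' hderiv hnonneg hlim, ?_⟩
  rw [integral_Ioi_of_hasDerivAt_of_nonneg' hderiv hnonneg hlim,
    show 1 + (a * R ^ 2)⁻¹ = (a + (R ^ 2)⁻¹) / a by field_simp,
    log_div (by positivity) ha.ne']
  ring

lemma integrableOn_and_setIntegral_le_of_le {α : Type*} [MeasurableSpace α] {μ : Measure α}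
    {f g : α → ℝ} {S : Set α} (hS : MeasurableSet S) (hf : AEStronglyMeasurable f (μ.restrict S))
    (hg : IntegrableOn g S μ) (hf₀ : ∀ x ∈ S, 0 ≤ f x) (hfg : ∀ x ∈ S, f x ≤ g x) :
    IntegrableOn f S μ ∧ ∫ x in S, f x ∂μ ≤ ∫ x in S, g x ∂μ := by
  have hf_int : IntegrableOn f S μ := hg.mono' hf <|
    (ae_restrict_mem hS).mono fun x hx => by
      rw [norm_of_nonneg (hf₀ x hx)]
      exact hfg x hx
  exact ⟨hf_int, setIntegral_mono_on hf_int hg hS hfg⟩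

lemma integral_Ioi_rpow_mul_exp_mul_one_add_sq_rpow_le {ν a s : ℝ} (hν : 0 < ν) (ha : 0 < a)
    (hs : 0 < s) :
    ∫ r in Ioi (0 : ℝ), r ^ (ν - 1) * exp (-(a * r ^ 2)) * (1 + r ^ 2) ^ (-ν / 2) ≤
      s ^ (ν / 2) / ν + log (1 + (a * s)⁻¹) / 2 := by
  set f := fun r : ℝ => r ^ (ν - 1) * exp (-(a * r ^ 2)) * (1 + r ^ 2) ^ (-ν / 2)
  set R := √s
  have hR : 0 < R := sqrt_pos.2 hs
  have hf_meas : AEStronglyMeasurable f := by fun_prop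
  have hf_nonneg : ∀ r ∈ Ioi (0 : ℝ), 0 ≤ f r := fun r (hr : 0 < r) => by positivity
  have head_le : ∀ r ∈ Ioi (0 : ℝ), f r ≤ r ^ (ν - 1) := fun r (hr : 0 < r) => by
    have hexp : exp (-(a * r ^ 2)) ≤ 1 := exp_le_one_iff.2 (by nlinarith)
    have hpow : (1 + r ^ 2) ^ (-ν / 2) ≤ 1 :=
      rpow_le_one_of_one_le_of_nonpos (by nlinarith) (by linarith)
    calc f r ≤ r ^ (ν - 1) * 1 * 1 := by dsimp only [f]; gcongr
      _ = r ^ (ν - 1) := by ring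
  have tail_le : ∀ r ∈ Ioi (0 : ℝ), f r ≤ (r * (1 + a * r ^ 2))⁻¹ := fun r (hr : 0 < r) =>
    calc f r = r ^ (ν - 1) * (1 + r ^ 2) ^ (-ν / 2) * exp (-(a * r ^ 2)) := by ring
      _ ≤ r⁻¹ * (1 + a * r ^ 2)⁻¹ := by
        gcongr
        · exact rpow_sub_one_mul_one_add_sq_rpow_neg_le hν.le hr
        · exact exp_neg_le_inv_one_add (by positivity)
      _ = (r * (1 + a * r ^ 2))⁻¹ := (mul_inv r _).symm
  have head_int : IntegrableOn (fun r => r ^ (ν - 1)) (Ioc 0 R) := by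
    rw [← intervalIntegrable_iff_integrableOn_Ioc_of_le hR.le]
    exact intervalIntegral.intervalIntegrable_rpow' (by linarith)
  have head_eq : ∫ r in Ioc 0 R, r ^ (ν - 1) = s ^ (ν / 2) / ν := by
    rw [← intervalIntegral.integral_of_le hR.le, integral_rpow (Or.inl (by linarith)),
      sub_add_cancel, zero_rpow hν.ne', sub_zero, show R = s ^ (1 / 2 : ℝ) from sqrt_eq_rpow s,
      ← rpow_mul hs.le]
    ring_nf
  obtain ⟨tail_int, tail_eq⟩ := integrableOn_and_integral_Ioi_inv_mul_one_add_mul_sq ha hR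
  obtain ⟨hf_head, head_bound⟩ := integrableOn_and_setIntegral_le_of_le measurableSet_Ioc
    hf_meas.restrict head_int (fun r hr => hf_nonneg r hr.1) (fun r hr => head_le r hr.1)
  obtain ⟨hf_tail, tail_bound⟩ := integrableOn_and_setIntegral_le_of_le measurableSet_Ioi
    hf_meas.restrict tail_int (fun r hr => hf_nonneg r (hR.trans hr))
    (fun r hr => tail_le r (hR.trans hr))
  rw [← Ioc_union_Ioi_eq_Ioi hR.le,
    setIntegral_union Ioc_disjoint_Ioi_same measurableSet_Ioi hf_head hf_tail]
  rw [head_eq] at head_bound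
  rw [tail_eq, sq_sqrt hs.le] at tail_bound
  exact add_le_add head_bound tail_bound

lemma integral_Ioi_rpow_mul_exp_mul_one_add_sq_rpow_le_log {ν q t : ℝ} (hν : 0 < ν) (hq : 0 < q)
    (ht : 0 < t) :
    ∫ r in Ioi (0 : ℝ), r ^ (ν - 1) * exp (-(q * t * r ^ 2)) * (1 + r ^ 2) ^ (-ν / 2) ≤
      log (exp 1 + 1 / t) * (exp (-(1 / 2)) + 1 / ν * (exp 1 / (2 * q)) ^ (ν / 2)) := by
  set L := log (exp 1 + 1 / t)
  set s := exp 1 / (2 * q)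
  have hL : 1 ≤ L :=
    calc 1 = log (exp 1) := (log_exp 1).symm
      _ ≤ L := log_le_log (exp_pos 1) (by linarith [one_div_pos.2 ht])
  have htail : log (1 + (q * t * s)⁻¹) ≤ L := by
    refine log_le_log (by positivity) ?_
    have : (q * t * s)⁻¹ ≤ 1 / t := by
      rw [show (q * t * s)⁻¹ = 2 / exp 1 * (1 / t) by simp only [s]; field_simp]
      refine mul_le_of_le_one_left (by positivity) ((div_le_one (by positivity)).2 ?_)
      linarith [add_one_le_exp 1]
    linarith [add_one_le_exp 1]
  have hhalf : 1 / 2 ≤ exp (-(1 / 2)) := by linarith [add_one_le_exp (-(1 / 2))]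
  have hhead : 0 ≤ s ^ (ν / 2) / ν := by positivity
  calc _ ≤ s ^ (ν / 2) / ν + log (1 + (q * t * s)⁻¹) / 2 :=
        integral_Ioi_rpow_mul_exp_mul_one_add_sq_rpow_le hν (mul_pos hq ht) (by positivity)
    _ ≤ L * (s ^ (ν / 2) / ν) + L * exp (-(1 / 2)) := by
        gcongr
        · exact le_mul_of_one_le_left hhead hL
        · nlinarith
    _ = L * (exp (-(1 / 2)) + 1 / ν * s ^ (ν / 2)) := by ring

theorem stmt14_general (n : ℕ) (hn : 1 ≤ n) (q : ℝ) (hq1 : 1 ≤ q) (t : ℝ) (ht : 0 < t) :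
    ωSphere n * (2 * π) ^ (-(n : ℝ)) *
        ∫ r in Ioi (0 : ℝ),
          r ^ ((n : ℝ) - 1) * Real.exp (-(q * t * r ^ 2)) * (1 + r ^ 2) ^ (-(n : ℝ) / 2) ≤
      2 * Real.log (Real.exp 1 + 1 / t) / ((4 * π) ^ ((n : ℝ) / 2) * Real.Gamma ((n : ℝ) / 2)) *
        (Real.exp (-(1 / 2)) + (1 / (n : ℝ)) * (Real.exp 1 / (2 * q)) ^ ((n : ℝ) / 2)) := by
  have hn₀ : (0 : ℝ) < n := Nat.cast_pos.2 hn
  have key := integral_Ioi_rpow_mul_exp_mul_one_add_sq_rpow_le_log hn₀ (one_pos.trans_le hq1) ht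
  rw [ωSphere_mul_two_pi_rpow_neg]
  exact (mul_le_mul_of_nonneg_left key (by positivity)).trans_eq (by ring)

theorem stmt14 (n : ℕ) (hn : 1 ≤ n) (q : ℝ) (hq1 : 1 ≤ q) (hq2 : q ≤ 2) (t : ℝ) (ht : 0 < t) :
    ωSphere n * (2 * π) ^ (-(n : ℝ)) *
        ∫ r in Ioi (0 : ℝ),
          r ^ ((n : ℝ) - 1) * Real.exp (-(q * t * r ^ 2)) * (1 + r ^ 2) ^ (-(n : ℝ) / 2) ≤
      2 * Real.log (Real.exp 1 + 1 / t) / ((4 * π) ^ ((n : ℝ) / 2) * Real.Gamma ((n : ℝ) / 2)) *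
        (Real.exp (-(1 / 2)) + (1 / (n : ℝ)) * (Real.exp 1 / (2 * q)) ^ ((n : ℝ) / 2)) :=
  stmt14_general n hn q hq1 t ht
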